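/- Let S be a semitransitive but not transitive subsemigroup of IS_n. Then S contains a nonzero nilpotent element, i.e., a nonzero partial bijection φ ∈ S such that some power φ^m is the empty partial bijection. -/

import Mathlib

def IsSubsemigroup {X : Type*} (S : Set (X ≃. X)) : Prop :=
  ∀ f ∈ S, ∀ g ∈ S, f.trans g ∈ S

def IsTransitiveSet {X : Type*} (S : Set (X ≃. X)) : Prop :=
  ∀ x y : X, ∃ f ∈ S, f x = some y

def IsSemitransitiveSet {X : Type*} (S : Set (X ≃. X)) : Prop :=
  ∀ x y : X, ∃ f ∈ S, f x = some y ∨ f y = some x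

def ppow {X : Type*} (f : X ≃. X) : ℕ → (X ≃. X)
  | 0 => PEquiv.refl X
  | n + 1 => (ppow f n).trans f

/-!
Extending a partial bijection `f` of a finite set `X` to a permutation shows that its power
`f ^ ω`, with `ω` the exponent of `Perm X`, is the identity on the points lying on cycles of `f`
and undefined elsewhere. Non-transitivity gives a pair `a`, `b` such that `b` cannot be reached
from `a`, and semitransitivity an `f ∈ S` with `f b = a`. If `f` has no cyclic points it is
nilpotent. Otherwise take a cyclic point `c` of `f`: if `c` reaches `b`, then `a` cannot reach `c`
and some `g ∈ S` has `g c = a`; otherwise some `g ∈ S` has `g b = c`. Accordingly the product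
`(f ^ ω).trans g` or `g.trans (f ^ ω)` in `S` again moves a point to one that cannot return to it,
and its cyclic points are cyclic points of `f` other than `c`. Induction on the number of cyclic
points concludes.
-/

open Equiv

namespace PEquiv

variable {X : Type*}

lemma ppow_one (f : X ≃. X) : ppow f 1 = f :=
  refl_trans f

lemma ppow_add (f : X ≃. X) (m n : ℕ) : ppow f (m + n) = (ppow f m).trans (ppow f n) := by
  induction n with
  | zero => exact (trans_refl _).symm
  | succ n ih => rw [← add_assoc, ppow, ih, trans_assoc]; rfl

lemma ppow_add_apply (f : X ≃. X) (m n : ℕ) (x : X) :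
    ppow f (m + n) x = (ppow f m x).bind (ppow f n) := by
  rw [ppow_add]; rfl

lemma ppow_succ_apply (f : X ≃. X) (n : ℕ) (x : X) :
    ppow f (n + 1) x = (ppow f n x).bind f :=
  rfl

lemma ppow_succ_apply' (f : X ≃. X) (n : ℕ) (x : X) :
    ppow f (n + 1) x = (f x).bind (ppow f n) := by
  rw [add_comm, ppow_add_apply, ppow_one]

lemma exists_perm_extending [Finite X] (f : X ≃. X) :
    ∃ σ : Perm X, ∀ x y, f x = some y → σ x = y := by
  obtain ⟨σ, hσ⟩ := Perm.exists_extending_pair (fun x : {x // (f x).isSome} ↦ (x : X))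
    (fun x ↦ (f x).get x.2) Subtype.val_injective
    fun x y (hxy : (f x).get x.2 = (f y).get y.2) ↦
      Subtype.ext <| f.inj (Option.get_mem x.2) (hxy ▸ Option.get_mem y.2)
  refine ⟨σ, fun x y hxy ↦ ?_⟩
  simpa [hxy] using hσ ⟨x, by simp [hxy]⟩

lemma pow_apply_eq_of_ppow_eq_some {f : X ≃. X} {σ : Perm X}
    (hσ : ∀ x y, f x = some y → σ x = y) {n : ℕ} {x z : X} (h : ppow f n x = some z) :
    (σ ^ n) x = z := by
  induction n generalizing z with
  | zero => simpa [ppow, PEquiv.refl_apply, eq_comm] using h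
  | succ n ih =>
    obtain ⟨y, hy, hyz⟩ := Option.bind_eq_some_iff.mp h
    rw [pow_succ', Perm.mul_apply, ih hy, hσ y z hyz]

lemma eq_of_ppow_exponent_eq_some [Finite X] {f : X ≃. X} {x z : X}
    (h : ppow f (Monoid.exponent (Perm X)) x = some z) : z = x := by
  obtain ⟨σ, hσ⟩ := f.exists_perm_extending
  simpa [Monoid.pow_exponent_eq_one] using (pow_apply_eq_of_ppow_eq_some hσ h).symm

lemma exponent_perm_ne_zero [Finite X] : Monoid.exponent (Perm X) ≠ 0 :=
  Monoid.exponent_ne_zero_of_finite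

/-- The points on cycles of `f`: those fixed by its idempotent power `f ^ exponent (Perm X)`. -/
def cyclicPts [Finite X] (f : X ≃. X) : Set X :=
  {c | ppow f (Monoid.exponent (Perm X)) c = some c}

variable [Finite X] {f : X ≃. X}

lemma mem_cyclicPts {c : X} : c ∈ cyclicPts f ↔ ppow f (Monoid.exponent (Perm X)) c = some c :=
  Iff.rfl

lemma mem_cyclicPts_of_ppow_exponent_eq_some {x z : X}
    (h : ppow f (Monoid.exponent (Perm X)) x = some z) : x ∈ cyclicPts f := by
  obtain rfl := eq_of_ppow_exponent_eq_some h
  exact h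

lemma ppow_exponent_eq_bot_of_cyclicPts_eq_empty (h : cyclicPts f = ∅) :
    ppow f (Monoid.exponent (Perm X)) = ⊥ := by
  ext x z
  refine ⟨fun hz ↦ ?_, fun hz ↦ by cases hz⟩
  simpa [h] using mem_cyclicPts_of_ppow_exponent_eq_some hz

lemma exists_apply_eq_some_of_mem_cyclicPts {c : X} (hc : c ∈ cyclicPts f) :
    ∃ z, f c = some z := by
  obtain ⟨k, hk⟩ := Nat.exists_eq_add_one_of_ne_zero (exponent_perm_ne_zero (X := X))
  rw [mem_cyclicPts, hk, ppow_succ_apply', Option.bind_eq_some_iff] at hc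
  obtain ⟨z, hz, -⟩ := hc
  exact ⟨z, hz⟩

lemma exists_apply_eq_some_self_of_mem_cyclicPts {c : X} (hc : c ∈ cyclicPts f) :
    ∃ u, f u = some c := by
  obtain ⟨k, hk⟩ := Nat.exists_eq_add_one_of_ne_zero (exponent_perm_ne_zero (X := X))
  rw [mem_cyclicPts, hk, ppow_succ_apply, Option.bind_eq_some_iff] at hc
  obtain ⟨u, -, hu⟩ := hc
  exact ⟨u, hu⟩

lemma mem_cyclicPts_of_apply_eq_some {u w : X} (huw : f u = some w) (hw : w ∈ cyclicPts f) :
    u ∈ cyclicPts f := by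
  obtain ⟨k, hk⟩ := Nat.exists_eq_add_one_of_ne_zero (exponent_perm_ne_zero (X := X))
  rw [mem_cyclicPts, hk, ppow_succ_apply, Option.bind_eq_some_iff] at hw
  obtain ⟨v, hv, hvw⟩ := hw
  obtain rfl : v = u := f.inj hvw huw
  rw [mem_cyclicPts, hk, ppow_succ_apply', huw]
  exact hv

lemma cyclicPts_ppow_exponent_trans_subset (g : X ≃. X) :
    cyclicPts ((ppow f (Monoid.exponent (Perm X))).trans g) ⊆ cyclicPts f := by
  intro c hc
  obtain ⟨z, hz⟩ := exists_apply_eq_some_of_mem_cyclicPts hc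
  obtain ⟨v, hv, -⟩ := (PEquiv.trans_eq_some _ _ _ _).mp hz
  exact mem_cyclicPts_of_ppow_exponent_eq_some hv

lemma cyclicPts_trans_ppow_exponent_subset (g : X ≃. X) :
    cyclicPts (g.trans (ppow f (Monoid.exponent (Perm X)))) ⊆ cyclicPts f := by
  intro c hc
  obtain ⟨u, hu⟩ := exists_apply_eq_some_self_of_mem_cyclicPts hc
  obtain ⟨v, -, hv⟩ := (PEquiv.trans_eq_some _ _ _ _).mp hu
  obtain rfl := eq_of_ppow_exponent_eq_some hv
  exact hv

end PEquiv

section Semigroup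

open PEquiv

variable {X : Type*} {S : Set (X ≃. X)}

def Reaches (S : Set (X ≃. X)) (x y : X) : Prop :=
  ∃ f ∈ S, f x = some y

lemma IsSubsemigroup.ppow_mem (hS : IsSubsemigroup S) {f : X ≃. X} (hf : f ∈ S) :
    ∀ {n : ℕ}, n ≠ 0 → ppow f n ∈ S
  | 1, _ => (ppow_one f).symm ▸ hf
  | n + 2, _ => hS _ (hS.ppow_mem hf n.succ_ne_zero) _ hf

lemma IsSubsemigroup.reaches_trans (hS : IsSubsemigroup S) {x y z : X}
    (hxy : Reaches S x y) (hyz : Reaches S y z) : Reaches S x z := by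
  obtain ⟨f, hf, hfx⟩ := hxy
  obtain ⟨g, hg, hgy⟩ := hyz
  exact ⟨f.trans g, hS f hf g hg, (PEquiv.trans_eq_some _ _ _ _).mpr ⟨y, hfx, hgy⟩⟩

lemma IsSemitransitiveSet.reaches_of_not_reaches (hsemi : IsSemitransitiveSet S) {x y : X}
    (h : ¬ Reaches S x y) : Reaches S y x := by
  obtain ⟨f, hf, hxy | hyx⟩ := hsemi x y
  · exact absurd ⟨f, hf, hxy⟩ h
  · exact ⟨f, hf, hyx⟩

variable [Finite X]

lemma IsSubsemigroup.not_mem_cyclicPts_of_not_reaches (hS : IsSubsemigroup S) {f : X ≃. X}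
    (hf : f ∈ S) {a b : X} (hba : f b = some a) (hab : ¬ Reaches S a b) : b ∉ cyclicPts f := by
  intro hb
  set K := Monoid.exponent (Perm X)
  obtain ⟨k, hk⟩ := Nat.exists_eq_add_one_of_ne_zero (exponent_perm_ne_zero (X := X))
  have hback : ppow f (k + K + 1) b = some b := by
    rw [show k + K + 1 = K + K by omega, ppow_add_apply, hb]
    exact hb
  rw [ppow_succ_apply', hba] at hback
  exact hab ⟨_, hS.ppow_mem hf (by omega), hback⟩

lemma IsSubsemigroup.exists_cyclicPts_ssubset (hS : IsSubsemigroup S)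
    (hsemi : IsSemitransitiveSet S) {f : X ≃. X} (hf : f ∈ S) {a b c : X}
    (hab : ¬ Reaches S a b) (hc : c ∈ cyclicPts f) :
    ∃ φ ∈ S, ∃ a' b', φ b' = some a' ∧ ¬ Reaches S a' b' ∧ cyclicPts φ ⊂ cyclicPts f := by
  have he : ppow f (Monoid.exponent (Perm X)) ∈ S := hS.ppow_mem hf exponent_perm_ne_zero
  by_cases hcb : Reaches S c b
  · have hac : ¬ Reaches S a c := fun hac ↦ hab (hS.reaches_trans hac hcb)
    obtain ⟨g, hg, hca⟩ := hsemi.reaches_of_not_reaches hac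
    have hφ := hS _ he _ hg
    have hφc : (ppow f (Monoid.exponent (Perm X))).trans g c = some a :=
      (PEquiv.trans_eq_some _ _ _ _).mpr ⟨c, hc, hca⟩
    exact ⟨_, hφ, a, c, hφc, hac, cyclicPts_ppow_exponent_trans_subset g,
      fun hsub ↦ hS.not_mem_cyclicPts_of_not_reaches hφ hφc hac (hsub hc)⟩
  · obtain ⟨g, hg, hbc⟩ := hsemi.reaches_of_not_reaches hcb
    have hφ := hS _ hg _ he
    have hφb : g.trans (ppow f (Monoid.exponent (Perm X))) b = some c :=
      (PEquiv.trans_eq_some _ _ _ _).mpr ⟨c, hbc, hc⟩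
    exact ⟨_, hφ, c, b, hφb, hcb, cyclicPts_trans_ppow_exponent_subset g,
      fun hsub ↦ hS.not_mem_cyclicPts_of_not_reaches hφ hφb hcb
        (mem_cyclicPts_of_apply_eq_some hφb (hsub hc))⟩

lemma IsSubsemigroup.exists_nilpotent_of_not_reaches (hS : IsSubsemigroup S)
    (hsemi : IsSemitransitiveSet S) {f : X ≃. X} (hf : f ∈ S) {a b : X} (hba : f b = some a)
    (hab : ¬ Reaches S a b) :
    ∃ φ ∈ S, φ ≠ (⊥ : X ≃. X) ∧ ∃ m : ℕ, 1 ≤ m ∧ ppow φ m = (⊥ : X ≃. X) := by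
  induction hn : (cyclicPts f).ncard using Nat.strong_induction_on generalizing f a b with
  | _ n ih =>
    rcases (cyclicPts f).eq_empty_or_nonempty with hempty | ⟨c, hc⟩
    · refine ⟨f, hf, fun hbot ↦ by simp [hbot] at hba, _,
        Nat.one_le_iff_ne_zero.mpr exponent_perm_ne_zero,
        ppow_exponent_eq_bot_of_cyclicPts_eq_empty hempty⟩
    · obtain ⟨φ, hφ, a', b', hφb, hab', hlt⟩ := hS.exists_cyclicPts_ssubset hsemi hf hab hc
      exact ih _ (hn ▸ Set.ncard_lt_ncard hlt) hφ hφb hab' rfl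

end Semigroup

/-- A semitransitive but not transitive subsemigroup of `IS_n` contains a nonzero
nilpotent element. -/
theorem semitransitive_not_transitive_contains_nilpotent {X : Type*} [Fintype X]
    (S : Set (X ≃. X)) (hS : IsSubsemigroup S) (hsemi : IsSemitransitiveSet S)
    (htr : ¬ IsTransitiveSet S) :
    ∃ φ ∈ S, φ ≠ (⊥ : X ≃. X) ∧ ∃ m : ℕ, 1 ≤ m ∧ ppow φ m = (⊥ : X ≃. X) := by
  obtain ⟨x, y, hxy⟩ : ∃ x y, ¬ Reaches S x y := by
    simpa [IsTransitiveSet, Reaches] using htr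
  obtain ⟨f, hf, hyx⟩ := hsemi.reaches_of_not_reaches hxy
  exact hS.exists_nilpotent_of_not_reaches hsemi hf hyx hxy
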